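/- arXiv:2312.14986 — 2 statements merged into one kernel-verified Lean document; each statement's English description precedes it below -/
import Mathlib

section
/- Let L be a finite set of lines in ℝ³ (or ℝ⁴) and X a finite set of irreducible algebraic surfaces of degree at most D, such that each surface in X contains at least A lines of L, any two distinct surfaces in X share at most D² common lines, and A > 2D·|L|^{1/2}. Then |X| ≤ 2|L|/A. -/
/-!
Suppose `|X| > 2|L|/A` and take `k = ⌊2|L|/A⌋ + 1` of the surfaces. By the second Bonferroni
inequality they cover at least `kA - (k choose 2) D²` lines of `L`. Since `(k - 1) A ≤ 2|L|` and
`A² > 4D²|L|`, we get `(k - 1) D² < A`, so this is more than `kA / 2 > |L|`, which is absurd.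
-/

open Finset

theorem two_mul_sum_card_le_card_biUnion_add_sum_card_inter {ι α : Type*} [DecidableEq ι]
    [DecidableEq α] (S : Finset ι) (f : ι → Finset α) :
    2 * ∑ i ∈ S, #(f i) ≤ 2 * #(S.biUnion f) + ∑ i ∈ S, ∑ j ∈ S.erase i, #(f i ∩ f j) := by
  induction S using Finset.cons_induction with
  | empty => simp
  | cons a S ha ih =>
    have hunion : #(f a ∪ S.biUnion f) + #(f a ∩ S.biUnion f) = #(f a) + #(S.biUnion f) :=
      card_union_add_card_inter _ _
    have hinter : #(f a ∩ S.biUnion f) ≤ ∑ j ∈ S, #(f a ∩ f j) := by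
      rw [inter_biUnion]
      exact card_biUnion_le
    have hpairs : ∑ i ∈ S, ∑ j ∈ (S.cons a ha).erase i, #(f i ∩ f j) =
        ∑ j ∈ S, #(f a ∩ f j) + ∑ i ∈ S, ∑ j ∈ S.erase i, #(f i ∩ f j) := by
      rw [← sum_add_distrib]
      refine sum_congr rfl fun i hi => ?_
      rw [erase_cons_of_ne _ (ne_of_mem_of_not_mem hi ha).symm, sum_cons, inter_comm]
    rw [sum_cons, sum_cons, erase_cons, hpairs, cons_eq_insert, biUnion_insert]
    omega

theorem two_mul_card_mul_le_of_card_inter_le {ι α : Type*} [DecidableEq ι] [DecidableEq α]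
    (L : Finset α) (S : Finset ι) (f : ι → Finset α) {A B : ℝ}
    (hsub : ∀ i ∈ S, f i ⊆ L) (hmany : ∀ i ∈ S, A ≤ #(f i))
    (hshare : ∀ i ∈ S, ∀ j ∈ S, i ≠ j → (#(f i ∩ f j) : ℝ) ≤ B) :
    2 * #S * A ≤ 2 * #L + #S * (#S - 1) * B := by
  have hbonf : 2 * ∑ i ∈ S, (#(f i) : ℝ) ≤
      2 * #L + ∑ i ∈ S, ∑ j ∈ S.erase i, (#(f i ∩ f j) : ℝ) := by
    have hunion : #(S.biUnion f) ≤ #L := card_le_card (biUnion_subset.2 hsub)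
    exact_mod_cast (two_mul_sum_card_le_card_biUnion_add_sum_card_inter S f).trans (by gcongr)
  have hsum : #S * A ≤ ∑ i ∈ S, (#(f i) : ℝ) := by
    simpa using sum_le_sum hmany
  have hpairs : ∑ i ∈ S, ∑ j ∈ S.erase i, (#(f i ∩ f j) : ℝ) ≤ #S * (#S - 1) * B := by
    calc ∑ i ∈ S, ∑ j ∈ S.erase i, (#(f i ∩ f j) : ℝ)
        ≤ ∑ i ∈ S, ∑ j ∈ S.erase i, B :=
          sum_le_sum fun i hi => sum_le_sum fun j hj =>
            hshare i hi j (mem_of_mem_erase hj) (ne_of_mem_erase hj).symm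
      _ = #S * (#S - 1) * B := by
          rw [sum_congr rfl fun i hi => by
            rw [sum_const, card_erase_of_mem hi, nsmul_eq_mul, Nat.cast_pred (card_pos.2 ⟨i, hi⟩)]]
          rw [sum_const, nsmul_eq_mul, mul_assoc]
  linarith

theorem two_mul_add_lt_of_two_mul_sqrt_lt {ℓ D A : ℝ} (hℓ : 0 ≤ ℓ) (hD : 0 ≤ D)
    (hA : 2 * D * √ℓ < A) {n : ℕ} (hn : n ≤ 2 * ℓ / A) (hn' : 2 * ℓ / A < n + 1) :
    2 * ℓ + (n + 1) * n * D ^ 2 < 2 * (n + 1) * A := by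
  have hA0 : 0 < A := lt_of_le_of_lt (by positivity) hA
  have hnA : n * A ≤ 2 * ℓ := (le_div_iff₀ hA0).1 hn
  have hℓA : 2 * ℓ < (n + 1) * A := (div_lt_iff₀ hA0).1 hn'
  have hsq : 4 * D ^ 2 * ℓ < A ^ 2 := by
    calc 4 * D ^ 2 * ℓ = (2 * D * √ℓ) ^ 2 := by rw [mul_pow, Real.sq_sqrt hℓ]; ring
      _ < A ^ 2 := pow_lt_pow_left₀ hA (by positivity) two_ne_zero
  have hnD : n * D ^ 2 < A := by
    refine lt_of_mul_lt_mul_right ?_ hA0.le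
    nlinarith [sq_nonneg D]
  nlinarith

theorem stmt_0_general {Line Surface : Type*} [DecidableEq Line]
    (L : Finset Line) (X : Finset Surface)
    (linesIn : Surface → Finset Line)
    (D A : ℝ) (hD : 1 ≤ D)
    (hsub : ∀ x ∈ X, linesIn x ⊆ L)
    (hmany : ∀ x ∈ X, (A : ℝ) ≤ ((linesIn x).card : ℝ))
    (hshare : ∀ x ∈ X, ∀ x' ∈ X, x ≠ x' →
      (((linesIn x ∩ linesIn x').card : ℝ) ≤ D ^ 2))
    (hAbig : 2 * D * Real.sqrt (L.card : ℝ) < A) :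
    (X.card : ℝ) ≤ 2 * (L.card : ℝ) / A := by
  classical
  have hD0 : 0 ≤ D := zero_le_one.trans hD
  have hA : 0 < A := lt_of_le_of_lt (by positivity) hAbig
  set n := ⌊2 * (#L : ℝ) / A⌋₊
  have hn : n ≤ 2 * (#L : ℝ) / A := Nat.floor_le (by positivity)
  suffices hX : #X ≤ n from (Nat.cast_le.2 hX).trans hn
  by_contra! hXn
  obtain ⟨S, hSX, hS⟩ := exists_subset_card_eq (Nat.succ_le_of_lt hXn)
  have hcover := two_mul_card_mul_le_of_card_inter_le L S linesIn
    (fun x hx => hsub x (hSX hx)) (fun x hx => hmany x (hSX hx))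
    (fun x hx x' hx' => hshare x (hSX hx) x' (hSX hx'))
  rw [hS] at hcover
  push_cast at hcover
  have hlt := two_mul_add_lt_of_two_mul_sqrt_lt (Nat.cast_nonneg _) hD0 hAbig hn
    (Nat.lt_floor_add_one _)
  linarith

/-- Surface-counting lemma (Guth): if each surface in `X` contains at least `A`
lines of `L`, any two distinct surfaces share at most `D²` lines, and
`A > 2·D·|L|^{1/2}`, then `|X| ≤ 2|L|/A`. -/
theorem stmt_0 {Line Surface : Type*} [DecidableEq Line]
    (L : Finset Line) (X : Finset Surface)
    (linesIn : Surface → Finset Line)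
    (D A : ℝ) (hD : 1 ≤ D) (hA : 0 < A)
    (hsub : ∀ x ∈ X, linesIn x ⊆ L)
    (hmany : ∀ x ∈ X, (A : ℝ) ≤ ((linesIn x).card : ℝ))
    (hshare : ∀ x ∈ X, ∀ x' ∈ X, x ≠ x' →
      (((linesIn x ∩ linesIn x').card : ℝ) ≤ D ^ 2))
    (hAbig : 2 * D * Real.sqrt (L.card : ℝ) < A) :
    (X.card : ℝ) ≤ 2 * (L.card : ℝ) / A :=
  stmt_0_general L X linesIn D A hD hsub hmany hshare hAbig
end

section
/- If Q₁ and Q₂ are nonzero polynomials in ℝ[x,y] with no common irreducible factor, then their common zero set Z(Q₁) ∩ Z(Q₂) ⊆ ℝ² contains at most (deg Q₁)·(deg Q₂) points. -/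
/-!
Let `P_m` be the space of polynomials of total degree `≤ m`, so `dim P_m = (m + 1)(m + 2)/2`,
and let `T` be a set of `a` common zeros of `Q₁, Q₂` (degrees `d₁, d₂`). Evaluation at `T` maps
`P_N`, `N = a + d₁ + d₂`, onto `K^T` (interpolation in degree `a`) and kills
`W = Q₁ P_{a+d₂} + Q₂ P_{a+d₁}`, so `dim W ≤ dim P_N - a`. By coprimality
`Q₁ P_{a+d₂} ∩ Q₂ P_{a+d₁} ⊆ Q₁ Q₂ P_a`, so `dim W ≥ dim P_{a+d₂} + dim P_{a+d₁} - dim P_a`.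
Since the second difference `dim P_N - dim P_{a+d₁} - dim P_{a+d₂} + dim P_a` is `d₁ d₂`,
this gives `a ≤ d₁ d₂`.
-/

open MvPolynomial Finset Module

theorem Set.finite_and_ncard_le_of_forall_finset_card_le {α : Type*} {s : Set α} {n : ℕ}
    (h : ∀ T : Finset α, ↑T ⊆ s → #T ≤ n) : s.Finite ∧ s.ncard ≤ n := by
  have hfin : s.Finite := by
    by_contra hinf
    obtain ⟨T, hTs, hTcard⟩ := Set.Infinite.exists_subset_card_eq hinf (n + 1)
    have := h T hTs
    omega
  exact ⟨hfin, (Set.ncard_eq_toFinset_card s hfin).trans_le (h _ (by simp))⟩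

theorem Submodule.finrank_add_finrank_map_le {K M N : Type*} [Field K] [AddCommGroup M]
    [Module K M] [AddCommGroup N] [Module K N] {V W : Submodule K M} [FiniteDimensional K V]
    (f : M →ₗ[K] N) (hWV : W ≤ V) (hWf : W ≤ LinearMap.ker f) :
    finrank K W + finrank K (V.map f) ≤ finrank K V := by
  set g := f ∘ₗ V.subtype
  have hrange : LinearMap.range g = V.map f := by
    rw [LinearMap.range_comp, Submodule.range_subtype]
  have hker : W.comap V.subtype ≤ LinearMap.ker g := fun x hx => hWf hx
  rw [← hrange, ← g.finrank_range_add_finrank_ker, add_comm,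
    ← (Submodule.comapSubtypeEquivOfLe hWV).finrank_eq]
  exact Nat.add_le_add_left (Submodule.finrank_mono hker) _

namespace MvPolynomial

variable {σ R K : Type*}

theorem finrank_restrictTotalDegree [Fintype σ] [CommRing R] [Nontrivial R] (m : ℕ) :
    finrank R (restrictTotalDegree σ R m) = (m + Fintype.card σ).choose (Fintype.card σ) := by
  classical
  have hmonomials : {n : σ →₀ ℕ | (n.sum fun _ e => e) ≤ m} =
      ((range (m + 1)).biUnion (univ.finsuppAntidiag ·) : Finset (σ →₀ ℕ)) := by
    ext n
    simp [Finsupp.sum_fintype]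
  rw [restrictTotalDegree, finrank_eq_nat_card_basis (basisRestrictSupport R _), hmonomials,
    Nat.card_coe_set_eq, Set.ncard_coe_finset, card_biUnion, ← Nat.sum_range_multichoose]
  · simp [card_finsuppAntidiag_nat_eq_multichoose]
  · intro i _ j _ hij
    exact disjoint_left.mpr fun n hi hj =>
      hij ((mem_finsuppAntidiag.mp hi).1 ▸ (mem_finsuppAntidiag.mp hj).1)

theorem two_mul_finrank_restrictTotalDegree_fin_two [CommRing R] [Nontrivial R] (m : ℕ) :
    2 * finrank R (restrictTotalDegree (Fin 2) R m) = (m + 2) * (m + 1) := by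
  rw [finrank_restrictTotalDegree, Fintype.card_fin, mul_comm,
    ← Nat.add_one_mul_choose_eq (m + 1) 1]
  simp

theorem map_mulLeft_restrictTotalDegree_le [CommSemiring R] (Q : MvPolynomial σ R) (m : ℕ) :
    (restrictTotalDegree σ R m).map (LinearMap.mulLeft R Q) ≤
      restrictTotalDegree σ R (m + Q.totalDegree) := by
  rintro _ ⟨P, hP, rfl⟩
  rw [SetLike.mem_coe, mem_restrictTotalDegree] at hP
  rw [mem_restrictTotalDegree, LinearMap.mulLeft_apply]
  exact (totalDegree_mul Q P).trans (by omega)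

theorem finrank_map_mulLeft [CommRing R] [IsDomain R] {Q : MvPolynomial σ R} (hQ : Q ≠ 0)
    (V : Submodule R (MvPolynomial σ R)) :
    finrank R (V.map (LinearMap.mulLeft R Q)) = finrank R V :=
  (V.equivMapOfInjective _ (mul_right_injective₀ hQ)).finrank_eq.symm

theorem map_mulLeft_restrictTotalDegree_inf_range_le [Field K] {Q₁ Q₂ : MvPolynomial σ K}
    (hQ₂ : Q₂ ≠ 0) (hcop : IsRelPrime Q₁ Q₂) (m : ℕ) :
    (restrictTotalDegree σ K m).map (LinearMap.mulLeft K Q₁) ⊓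
        LinearMap.range (LinearMap.mulLeft K Q₂) ≤
      (restrictTotalDegree σ K (m - Q₂.totalDegree)).map (LinearMap.mulLeft K (Q₁ * Q₂)) := by
  rintro _ ⟨⟨A, hA, rfl⟩, B, hB⟩
  rw [SetLike.mem_coe, mem_restrictTotalDegree] at hA
  simp only [LinearMap.mulLeft_apply] at hB ⊢
  obtain ⟨C, rfl⟩ : Q₂ ∣ A := hcop.symm.dvd_of_dvd_mul_left ⟨B, hB.symm⟩
  refine ⟨C, ?_, mul_assoc _ _ _⟩
  rcases eq_or_ne C 0 with rfl | hC
  · simp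
  · rw [totalDegree_mul_of_isDomain hQ₂ hC] at hA
    rw [SetLike.mem_coe, mem_restrictTotalDegree]
    omega

noncomputable def evalOn [CommSemiring R] (T : Finset (σ → R)) :
    MvPolynomial σ R →ₗ[R] (T → R) :=
  LinearMap.pi fun p => (aeval (p : σ → R)).toLinearMap

@[simp]
theorem evalOn_apply [CommSemiring R] (T : Finset (σ → R)) (P : MvPolynomial σ R) (p : T) :
    evalOn T P p = eval (p : σ → R) P := by
  simp [evalOn]

theorem map_mulLeft_le_ker_evalOn [CommSemiring R] {T : Finset (σ → R)} {Q : MvPolynomial σ R}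
    (hQ : ∀ p ∈ T, eval p Q = 0) (V : Submodule R (MvPolynomial σ R)) :
    V.map (LinearMap.mulLeft R Q) ≤ LinearMap.ker (evalOn T) := by
  rintro _ ⟨P, -, rfl⟩
  ext p
  simp [hQ p p.2]

theorem exists_totalDegree_le_eval_eq_one_of_notMem [Field K] {p : σ → K} {T : Finset (σ → K)}
    (hp : p ∉ T) :
    ∃ P : MvPolynomial σ K, P.totalDegree ≤ #T ∧ eval p P = 1 ∧ ∀ q ∈ T, eval q P = 0 := by
  classical
  induction T using Finset.induction_on with
  | empty => exact ⟨1, by simp⟩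
  | insert q T hqT ih =>
    obtain ⟨P, hPdeg, hPp, hPT⟩ := ih fun h => hp (mem_insert_of_mem h)
    obtain ⟨i, hi⟩ := Function.ne_iff.mp (ne_of_mem_of_not_mem (mem_insert_self q T) hp).symm
    set L : MvPolynomial σ K := C (p i - q i)⁻¹ * (X i - C (q i))
    have hLdeg : L.totalDegree ≤ 1 := (totalDegree_mul _ _).trans <| by
      simpa using (totalDegree_sub_C_le (X i) (q i)).trans_eq (totalDegree_X i)
    refine ⟨P * L, ?_, ?_, ?_⟩
    · rw [card_insert_of_notMem hqT]
      exact (totalDegree_mul P L).trans (by omega)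
    · simp [L, hPp, sub_ne_zero.mpr hi]
    · intro r hr
      rcases mem_insert.mp hr with rfl | hr
      · simp [L]
      · simp [hPT r hr]

theorem map_evalOn_restrictTotalDegree [Field K] {T : Finset (σ → K)} {m : ℕ} (hT : #T ≤ m) :
    (restrictTotalDegree σ K m).map (evalOn T) = ⊤ := by
  classical
  rw [eq_top_iff, ← (Pi.basisFun K T).span_eq, Submodule.span_le]
  rintro _ ⟨q, rfl⟩
  obtain ⟨P, hPdeg, hPq, hPT⟩ := exists_totalDegree_le_eval_eq_one_of_notMem (notMem_erase q.1 T)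
  refine ⟨P, (mem_restrictTotalDegree _ _ _).mpr (hPdeg.trans (card_erase_le.trans hT)), ?_⟩
  ext r
  rcases eq_or_ne r q with rfl | hne
  · simp [hPq]
  · simp [hPT r (mem_erase.mpr ⟨Subtype.coe_ne_coe.mpr hne, r.2⟩), hne]

theorem card_le_totalDegree_mul_totalDegree [Field K] {Q₁ Q₂ : MvPolynomial (Fin 2) K}
    (hQ₁ : Q₁ ≠ 0) (hQ₂ : Q₂ ≠ 0) (hcop : IsRelPrime Q₁ Q₂) {T : Finset (Fin 2 → K)}
    (hT : ∀ p ∈ T, eval p Q₁ = 0 ∧ eval p Q₂ = 0) :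
    #T ≤ Q₁.totalDegree * Q₂.totalDegree := by
  set a := #T
  set d₁ := Q₁.totalDegree
  set d₂ := Q₂.totalDegree
  set W₁ := (restrictTotalDegree (Fin 2) K (a + d₂)).map (LinearMap.mulLeft K Q₁)
  set W₂ := (restrictTotalDegree (Fin 2) K (a + d₁)).map (LinearMap.mulLeft K Q₂)
  have hW : W₁ ⊔ W₂ ≤ restrictTotalDegree (Fin 2) K (a + d₁ + d₂) := by
    refine sup_le ((map_mulLeft_restrictTotalDegree_le Q₁ _).trans ?_)
      ((map_mulLeft_restrictTotalDegree_le Q₂ _).trans ?_) <;>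
    exact fun P hP => (mem_restrictTotalDegree _ _ _).mpr
      (((mem_restrictTotalDegree _ _ _).mp hP).trans (by omega))
  have hWker : W₁ ⊔ W₂ ≤ LinearMap.ker (evalOn T) :=
    sup_le (map_mulLeft_le_ker_evalOn (fun p hp => (hT p hp).1) _)
      (map_mulLeft_le_ker_evalOn (fun p hp => (hT p hp).2) _)
  have hcodim := Submodule.finrank_add_finrank_map_le (evalOn T) hW hWker
  rw [map_evalOn_restrictTotalDegree (by omega), finrank_top, finrank_fintype_fun_eq_card,
    Fintype.card_coe] at hcodim
  have hsum := Submodule.finrank_sup_add_finrank_inf_eq W₁ W₂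
  have hinf : finrank K ↥(W₁ ⊓ W₂) ≤ finrank K (restrictTotalDegree (Fin 2) K a) := by
    have hle : W₁ ⊓ W₂ ≤ _ := (inf_le_inf_left W₁ LinearMap.map_le_range).trans
      (map_mulLeft_restrictTotalDegree_inf_range_le hQ₂ hcop (a + d₂))
    rw [Nat.add_sub_cancel] at hle
    exact (Submodule.finrank_mono hle).trans_eq (finrank_map_mulLeft (mul_ne_zero hQ₁ hQ₂) _)
  rw [finrank_map_mulLeft hQ₁, finrank_map_mulLeft hQ₂] at hsum
  have hN := two_mul_finrank_restrictTotalDegree_fin_two (R := K) (a + d₁ + d₂)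
  have hN₁ := two_mul_finrank_restrictTotalDegree_fin_two (R := K) (a + d₁)
  have hN₂ := two_mul_finrank_restrictTotalDegree_fin_two (R := K) (a + d₂)
  have ha := two_mul_finrank_restrictTotalDegree_fin_two (R := K) a
  nlinarith

end MvPolynomial

/-- Bézout in ℝ²: two nonzero coprime polynomials (no common irreducible
factor) have at most `deg Q₁ · deg Q₂` common real zeros. -/
theorem stmt_3 (Q₁ Q₂ : MvPolynomial (Fin 2) ℝ)
    (h₁ : Q₁ ≠ 0) (h₂ : Q₂ ≠ 0)
    (hcop : ∀ r : MvPolynomial (Fin 2) ℝ, Irreducible r → r ∣ Q₁ → ¬ r ∣ Q₂) :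
    {p : Fin 2 → ℝ | eval p Q₁ = 0 ∧ eval p Q₂ = 0}.Finite ∧
    {p : Fin 2 → ℝ | eval p Q₁ = 0 ∧ eval p Q₂ = 0}.ncard ≤
      Q₁.totalDegree * Q₂.totalDegree := by
  have hrel : IsRelPrime Q₁ Q₂ :=
    WfDvdMonoid.isRelPrime_of_no_irreducible_factors (fun h => h₁ h.1) hcop
  exact Set.finite_and_ncard_le_of_forall_finset_card_le fun T hT =>
    card_le_totalDegree_mul_totalDegree h₁ h₂ hrel fun p hp => hT hp
end
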